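/- For every integer n ≥ 2, the sums of Catalan numbers satisfy the recurrence (n+1)·S_n + (1-5n)·S_{n-1} = 2(1-2n)·S_{n-2}. -/

import Mathlib

open Real Filter

noncomputable def C (k : ℕ) : ℝ := (Nat.choose (2 * k) k : ℝ) / ((k : ℝ) + 1)

noncomputable def S (n : ℕ) : ℝ := ∑ k ∈ Finset.Icc 1 n, C k

noncomputable def u (n : ℕ) : ℝ := 4 ^ (n + 1) / (3 * Real.sqrt (π * (n : ℝ) ^ 3))

noncomputable def ϑ (n : ℕ) : ℝ := 4 ^ (n + 1) / (3 * ((n : ℝ) + 1) * Real.sqrt (π * n))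

/-
Telescoping: with `S (n + 2) = S n + C (n + 1) + C (n + 2)`, the recurrence for `S` is the
first-order recurrence `(k + 2) C (k + 1) = 2 (2k + 1) C k` of the Catalan numbers at `k = n - 1`.
-/

theorem S_succ (n : ℕ) : S (n + 1) = S n + C (n + 1) :=
  Finset.sum_Icc_succ_top (Nat.le_add_left 1 n) C

theorem C_eq_centralBinom_div (k : ℕ) : C k = (Nat.centralBinom k : ℝ) / ((k : ℝ) + 1) := rfl

theorem add_two_mul_C_succ (k : ℕ) :
    ((k : ℝ) + 2) * C (k + 1) = 2 * (2 * (k : ℝ) + 1) * C k := by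
  have h := congrArg (Nat.cast : ℕ → ℝ) (Nat.succ_mul_centralBinom_succ k)
  push_cast at h
  rw [C_eq_centralBinom_div, C_eq_centralBinom_div]
  push_cast
  field_simp
  linear_combination ((k : ℝ) + 2) * h

theorem stmt17 (n : ℕ) (hn : 2 ≤ n) :
    ((n : ℝ) + 1) * S n + (1 - 5 * (n : ℝ)) * S (n - 1) = 2 * (1 - 2 * (n : ℝ)) * S (n - 2) := by
  obtain ⟨m, rfl⟩ : ∃ m, n = m + 2 := ⟨n - 2, by omega⟩
  have hC := add_two_mul_C_succ (m + 1)
  rw [show m + 2 - 1 = m + 1 from rfl, show m + 2 - 2 = m from rfl, S_succ (m + 1), S_succ m]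
  push_cast at hC ⊢
  linear_combination hC
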